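/- (Nivat theorem for weighted timed automata.) Let Σ be an alphabet and 𝕄 = (M,+,val,𝟘) a timed valuation monoid. Then Rec(Σ,𝕄) = N^Seq(Σ,𝕄) = N^Det(Σ,𝕄) = N^Unamb(Σ,𝕄) ⊆ N(Σ,𝕄). -/

import Mathlib

/-!
A run of a weighted timed automaton `W` can itself be written as a timed word over the edges
of `W`. These words form a language accepted by a sequential timed automaton, and relabelling
each edge by its label, resp. by its pair of weights, turns the Nivat expression back into the
behaviour of `W`; hence `Rec ⊆ N^Seq`. Conversely, for an unambiguous `T` over `Γ`, the weighted
automaton that simulates `T`, outputs `h` of each letter and charges its `g`-weight has exactly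
one run for every `v ∈ L(T)` with `h(v) = w`, so its behaviour is `h((val ∘ g) ∩ L(T))`; hence
`N^Unamb ⊆ Rec`. As sequential implies deterministic implies unambiguous, all classes coincide.
-/

open scoped NNReal Classical

/-! # Core definitions: timed automata and weighted timed automata -/

/-- Comparison operators ⋈ ∈ {<, ≤, =, ≥, >}. -/
inductive Cmp : Type
  | lt | le | eq | ge | gt
  deriving DecidableEq

/-- Evaluation of a comparison `r ⋈ c` for `r ∈ ℝ≥0` and `c ∈ ℕ`. -/
def Cmp.eval : Cmp → ℝ≥0 → ℕ → Prop
  | .lt, r, c => r < (c : ℝ≥0)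
  | .le, r, c => r ≤ (c : ℝ≥0)
  | .eq, r, c => r = (c : ℝ≥0)
  | .ge, r, c => (c : ℝ≥0) ≤ r
  | .gt, r, c => (c : ℝ≥0) < r

/-- Clock constraints over a set `C` of clocks: `True` or conjunctions of `x ⋈ c`. -/
inductive ClockConstraint (C : Type) : Type
  | tt : ClockConstraint C
  | atom : C → Cmp → ℕ → ClockConstraint C
  | conj : ClockConstraint C → ClockConstraint C → ClockConstraint C

/-- A clock valuation assigns a non-negative real to each clock. -/
def ClockVal (C : Type) : Type := C → ℝ≥0

/-- Satisfaction of clock constraints. -/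
def ClockConstraint.Sat {C : Type} (ν : ClockVal C) : ClockConstraint C → Prop
  | .tt => True
  | .atom x op c => op.eval (ν x) c
  | .conj φ ψ => φ.Sat ν ∧ ψ.Sat ν

/-- `ν + t`: add `t` to every clock. -/
def ClockVal.add {C : Type} (ν : ClockVal C) (t : ℝ≥0) : ClockVal C := fun x => ν x + t

/-- `ν[Λ := 0]`: reset the clocks in `Λ` to `0`. -/
noncomputable def ClockVal.reset {C : Type} (ν : ClockVal C) (Λ : Set C) : ClockVal C :=
  fun x => if x ∈ Λ then 0 else ν x

/-- The clock valuation assigning `0` to every clock. -/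
def ClockVal.zero {C : Type} : ClockVal C := fun _ => 0

/-- An edge of a timed automaton: an element of `L × Σ × Φ(C) × 2^C × L`. -/
structure Edge (L A C : Type) : Type where
  src : L
  label : A
  guard : ClockConstraint C
  reset : Set C
  dst : L

/-- A timed automaton over the alphabet `A`. -/
structure TimedAutomaton (A : Type) : Type 1 where
  L : Type
  C : Type
  finL : Finite L
  finC : Finite C
  I : Set L
  F : Set L
  E : Set (Edge L A C)
  finE : E.Finite

/-- A (non-empty finite) timed word over `A`. -/
abbrev TimedWord (A : Type) : Type := { w : List (A × ℝ≥0) // w ≠ [] }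

/-- `T.IsRunFrom ℓ ν w es` holds iff `es` is the sequence of edges of a run of `T`
reading the timed word `w`, starting in location `ℓ` with clock valuation `ν`,
and ending in a final location. -/
def TimedAutomaton.IsRunFrom {A : Type} (T : TimedAutomaton A) :
    T.L → ClockVal T.C → List (A × ℝ≥0) → List (Edge T.L A T.C) → Prop
  | ℓ, _, [], [] => ℓ ∈ T.F
  | ℓ, ν, (a, t) :: w, e :: es =>
      e ∈ T.E ∧ e.src = ℓ ∧ e.label = a ∧ e.guard.Sat (ν.add t) ∧
      T.IsRunFrom e.dst ((ν.add t).reset e.reset) w es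
  | _, _, [], _ :: _ => False
  | _, _, _ :: _, [] => False

/-- `Run_T(w)`: the set of runs (identified with their edge sequences) of `T` on `w`. -/
def TimedAutomaton.RunOn {A : Type} (T : TimedAutomaton A) (w : TimedWord A) :
    Set (List (Edge T.L A T.C)) :=
  { es | ∃ ℓ₀ ∈ T.I, T.IsRunFrom ℓ₀ ClockVal.zero w.1 es }

/-- `L(T)`: the timed language accepted by `T`. -/
def TimedAutomaton.Lang {A : Type} (T : TimedAutomaton A) : Set (TimedWord A) :=
  { w | (T.RunOn w).Nonempty }

/-- A timed automaton is unambiguous if every timed word has at most one run. -/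
def TimedAutomaton.Unambiguous {A : Type} (T : TimedAutomaton A) : Prop :=
  ∀ w : TimedWord A, (T.RunOn w).Subsingleton

/-- A timed automaton is deterministic if it has a single initial location and the guards of
any two distinct edges with the same source and label are jointly unsatisfiable. -/
def TimedAutomaton.Deterministic {A : Type} (T : TimedAutomaton A) : Prop :=
  (∃ ℓ, T.I = {ℓ}) ∧
  ∀ e₁ ∈ T.E, ∀ e₂ ∈ T.E, e₁.src = e₂.src → e₁.label = e₂.label → e₁ ≠ e₂ →
    ∀ ν : ClockVal T.C, ¬ (e₁.guard.Sat ν ∧ e₂.guard.Sat ν)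

/-- A timed automaton is sequential if it has a single initial location and any two edges
with the same source and label are equal. -/
def TimedAutomaton.Sequential {A : Type} (T : TimedAutomaton A) : Prop :=
  (∃ ℓ, T.I = {ℓ}) ∧
  ∀ e₁ ∈ T.E, ∀ e₂ ∈ T.E, e₁.src = e₂.src → e₁.label = e₂.label → e₁ = e₂

/-- A timed language is recognizable by a timed automaton satisfying `P`. -/
def TLRecognizableBy {A : Type} (P : TimedAutomaton A → Prop) (𝓛 : Set (TimedWord A)) : Prop :=
  ∃ T : TimedAutomaton A, P T ∧ T.Lang = 𝓛

/-- A weighted timed automaton over the alphabet `A` and (the domain `M` of) a timed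
valuation monoid: a timed automaton together with weights on locations and edges.
The timed valuation monoid itself is given by an `AddCommMonoid M` instance together with a
timed valuation function `val : List ((M × M) × ℝ≥0) → M` (only its values on non-empty
lists, i.e. on `𝕋(M×M)⁺`, ever matter). -/
structure WTA (A M : Type) extends TimedAutomaton A where
  wtL : L → M
  wtE : Edge L A C → M

/-- The timed word `wt♯(ρ) ∈ 𝕋(M×M)⁺` associated with a run: the `i`-th letter is
`((wt(ℓ_{i-1}), wt(e_i)), t_i)`, where `ℓ_{i-1}` is the source location of edge `e_i`. -/
def WTA.runWord {A M : Type} (W : WTA A M) (w : List (A × ℝ≥0))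
    (es : List (Edge W.L A W.C)) : List ((M × M) × ℝ≥0) :=
  List.zipWith (fun (p : A × ℝ≥0) e => ((W.wtL e.src, W.wtE e), p.2)) w es

/-- The behavior `‖W‖ : 𝕋A⁺ → M` of a WTA: `‖W‖(w) = Σ (val(wt♯(ρ)) : ρ ∈ Run_W(w))`,
the empty sum being `0` (the monoid unit `𝟘`). -/
noncomputable def WTA.behavior {A M : Type} [AddCommMonoid M]
    (val : List ((M × M) × ℝ≥0) → M) (W : WTA A M) (w : TimedWord A) : M :=
  ∑ᶠ es ∈ W.toTimedAutomaton.RunOn w, val (W.runWord w.1 es)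

/-- A quantitative timed language `r : 𝕋A⁺ → M` is recognizable over the timed valuation
monoid `(M, +, val, 𝟘)` by a WTA whose underlying timed automaton satisfies `P`. -/
def QTLRecognizableBy {A M : Type} [AddCommMonoid M] (val : List ((M × M) × ℝ≥0) → M)
    (P : TimedAutomaton A → Prop) (r : TimedWord A → M) : Prop :=
  ∃ W : WTA A M, P W.toTimedAutomaton ∧ ∀ w, W.behavior val w = r w

/-- Recognizability (no restriction on the underlying timed automaton). -/
def QTLRecognizable {A M : Type} [AddCommMonoid M] (val : List ((M × M) × ℝ≥0) → M)
    (r : TimedWord A → M) : Prop :=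
  ∃ W : WTA A M, ∀ w, W.behavior val w = r w

/-- Renaming of timed words along `h : Γ → A`. -/
def mapTimedWord {Γ A : Type} (h : Γ → A) (v : TimedWord Γ) : TimedWord A :=
  ⟨v.1.map (fun p => (h p.1, p.2)), by
    cases v with
    | mk l hl => cases l with
      | nil => exact absurd rfl hl
      | cons p l => simp⟩

/-- `h(r)(w) = Σ (r(v) : v ∈ 𝕋Γ⁺, h(v) = w)` (a finite sum when `Γ` is finite). -/
noncomputable def pushQTL {Γ A M : Type} [AddCommMonoid M] (h : Γ → A)
    (r : TimedWord Γ → M) (w : TimedWord A) : M :=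
  ∑ᶠ v ∈ { v : TimedWord Γ | mapTimedWord h v = w }, r v

/-- `(val ∘ g)(w) = val((g(a₁),t₁)…(g(aₙ),tₙ))`. -/
def valComp {A M : Type} (val : List ((M × M) × ℝ≥0) → M) (g : A → M × M)
    (w : TimedWord A) : M :=
  val (w.1.map (fun p => (g p.1, p.2)))

/-- The intersection `r ∩ 𝓛` of a quantitative timed language with a timed language. -/
noncomputable def interQTL {A M : Type} [Zero M] (r : TimedWord A → M)
    (𝓛 : Set (TimedWord A)) (w : TimedWord A) : M :=
  if w ∈ 𝓛 then r w else 0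

/-- Membership in the Nivat class `N^P(A, 𝕄)`: `𝕃 = h((val ∘ g) ∩ 𝓛)` for some alphabet `Γ`,
maps `h : Γ → A`, `g : Γ → M × M` and a timed language `𝓛` recognizable by a timed
automaton satisfying `P`. -/
def NivatMem {A M : Type} [AddCommMonoid M] (val : List ((M × M) × ℝ≥0) → M)
    (P : ∀ {Γ : Type}, TimedAutomaton Γ → Prop) (𝕃 : TimedWord A → M) : Prop :=
  ∃ (Γ : Type) (_ : Finite Γ) (_ : Nonempty Γ) (h : Γ → A) (g : Γ → M × M)
    (𝓛 : Set (TimedWord Γ)),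
      TLRecognizableBy P 𝓛 ∧ ∀ w, 𝕃 w = pushQTL h (interQTL (valComp val g) 𝓛) w

/-- Membership in the class `H^P(A, 𝕄)`: `𝕃 = h(r)` for some alphabet `Γ`, `h : Γ → A`
and a quantitative timed language `r` recognizable by a WTA whose underlying timed
automaton satisfies `P`. -/
def HMem {A M : Type} [AddCommMonoid M] (val : List ((M × M) × ℝ≥0) → M)
    (P : ∀ {Γ : Type}, TimedAutomaton Γ → Prop) (𝕃 : TimedWord A → M) : Prop :=
  ∃ (Γ : Type) (_ : Finite Γ) (_ : Nonempty Γ) (h : Γ → A) (r : TimedWord Γ → M),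
      QTLRecognizableBy val (fun T => P T) r ∧ ∀ w, 𝕃 w = pushQTL h r w

/-- Idempotency of a timed valuation monoid. -/
def IsIdempotent (M : Type) [Add M] : Prop := ∀ m : M, m + m = m

/-- Location-independence of a timed valuation function: the value of `val` on a non-empty
timed word over `M × M` depends only on the second components and the time stamps. -/
def LocIndep {M : Type} (val : List ((M × M) × ℝ≥0) → M) : Prop :=
  ∀ l l' : List ((M × M) × ℝ≥0), l ≠ [] →
    l.map (fun p => (p.1.2, p.2)) = l'.map (fun p => (p.1.2, p.2)) → val l = val l'

def relabel {Γ X : Type} (f : Γ → X) (v : List (Γ × ℝ≥0)) : List (X × ℝ≥0) :=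
  v.map fun p => (f p.1, p.2)

theorem map_snd_relabel {Γ X : Type} (f : Γ → X) (v : List (Γ × ℝ≥0)) :
    (relabel f v).map Prod.snd = v.map Prod.snd := by
  simp [relabel]

theorem mapTimedWord_eq_iff {Γ A : Type} (h : Γ → A) (v : TimedWord Γ) (w : TimedWord A) :
    mapTimedWord h v = w ↔ relabel h v.1 = w.1 :=
  Subtype.ext_iff

theorem pushQTL_interQTL {Γ A M : Type} [AddCommMonoid M] (h : Γ → A) (r : TimedWord Γ → M)
    (𝓛 : Set (TimedWord Γ)) (w : TimedWord A) :
    pushQTL h (interQTL r 𝓛) w = ∑ᶠ v ∈ {v | mapTimedWord h v = w} ∩ 𝓛, r v := by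
  simp_rw [pushQTL, interQTL, ← Set.indicator_apply, finsum_mem_def, Set.indicator_indicator]

theorem NivatMem.mono {A M : Type} [AddCommMonoid M] {val : List ((M × M) × ℝ≥0) → M}
    {P Q : ∀ {Γ : Type}, TimedAutomaton Γ → Prop} {𝕃 : TimedWord A → M}
    (hPQ : ∀ {Γ : Type} (T : TimedAutomaton Γ), P T → Q T) (hP : NivatMem val P 𝕃) :
    NivatMem val Q 𝕃 := by
  obtain ⟨Γ, hfin, hne, h, g, 𝓛, ⟨T, hT, hT𝓛⟩, h𝕃⟩ := hP
  exact ⟨Γ, hfin, hne, h, g, 𝓛, ⟨T, hPQ T hT, hT𝓛⟩, h𝕃⟩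

theorem List.eq_of_filterMap_fst_eq {α β : Type*} {l l' : List (Option α × β)}
    (hl : ∀ p ∈ l, p.1.isSome) (hl' : ∀ p ∈ l', p.1.isSome)
    (hsnd : l.map Prod.snd = l'.map Prod.snd)
    (hfst : l.filterMap Prod.fst = l'.filterMap Prod.fst) : l = l' := by
  have map_fst : ∀ l : List (Option α × β), (∀ p ∈ l, p.1.isSome) →
      l.map Prod.fst = (l.filterMap Prod.fst).map some := fun l hl => by
    rw [List.map_filterMap_some_eq_filter_map_isSome, List.filter_eq_self.2 (by simpa using hl)]
  rw [← List.zip_unzip l, ← List.zip_unzip l', List.unzip_fst, List.unzip_snd, List.unzip_fst,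
    List.unzip_snd, map_fst l hl, map_fst l' hl', hfst, hsnd]

def readWord {L A C X : Type} (es : List (Edge L A C)) (u : List (X × ℝ≥0)) : List (A × ℝ≥0) :=
  List.zipWith (fun e p => (e.label, p.2)) es u

namespace TimedAutomaton

variable {A : Type} {T : TimedAutomaton A}

theorem IsRunFrom.readWord_relabel {X : Type} (f : A → X) {ℓ ν v es}
    (h : T.IsRunFrom ℓ ν v es) : readWord es (relabel f v) = v := by
  induction ℓ, ν, v, es using IsRunFrom.induct T with
  | case1 => rfl
  | case2 ℓ ν a t v e es ih =>
    obtain ⟨-, -, rfl, -, hrun⟩ := h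
    exact congrArg _ (ih hrun)
  | case3 | case4 => exact h.elim

theorem Sequential.deterministic (hT : T.Sequential) : T.Deterministic :=
  ⟨hT.1, fun e₁ h₁ e₂ h₂ hsrc hlab hne _ _ => hne (hT.2 e₁ h₁ e₂ h₂ hsrc hlab)⟩

theorem Deterministic.isRunFrom_unique (hT : T.Deterministic) {ℓ ν u es es'}
    (h : T.IsRunFrom ℓ ν u es) (h' : T.IsRunFrom ℓ ν u es') : es = es' := by
  induction ℓ, ν, u, es using IsRunFrom.induct T generalizing es' with
  | case1 => cases es' with
    | nil => rfl
    | cons => exact h'.elim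
  | case2 ℓ ν a t u e es ih =>
    cases es' with
    | nil => exact h'.elim
    | cons e' es' =>
      obtain ⟨he, hsrc, hlab, hg, hrun⟩ := h
      obtain ⟨he', hsrc', hlab', hg', hrun'⟩ := h'
      obtain rfl : e = e' := by
        by_contra hne
        exact hT.2 e he e' he' (hsrc.trans hsrc'.symm) (hlab.trans hlab'.symm) hne _ ⟨hg, hg'⟩
      rw [ih hrun hrun']
  | case3 | case4 => exact h.elim

theorem Deterministic.unambiguous (hT : T.Deterministic) : T.Unambiguous := by
  rintro w es ⟨ℓ, hℓ, h⟩ es' ⟨ℓ', hℓ', h'⟩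
  obtain ⟨ℓ₀, hI⟩ := hT.1
  rw [hI, Set.mem_singleton_iff] at hℓ hℓ'
  subst hℓ hℓ'
  exact hT.isRunFrom_unique h h'

end TimedAutomaton

namespace WTA

variable {S M : Type} (W : WTA S M)

/-- The location `none` stands for all initial locations of `W` at once. -/
def Represents (o : Option W.L) (ℓ : W.L) : Prop :=
  o.elim (ℓ ∈ W.I) (· = ℓ)

def edgeTransition (o : Option W.L) (e : W.E) : Edge (Option W.L) (Option W.E) W.C :=
  ⟨o, some e, e.1.guard, e.1.reset, some e.1.dst⟩

/-- Accepts the runs of `W`, spelled as words over its edges. The letter `none` is never read;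
it only makes the alphabet nonempty. -/
@[reducible] def edgeAutomaton : TimedAutomaton (Option W.E) where
  L := Option W.L
  C := W.C
  finL := have := W.finL; inferInstance
  finC := W.finC
  I := {none}
  F := {o | ∃ ℓ ∈ W.F, W.Represents o ℓ}
  E := (fun p : Option W.L × W.E => W.edgeTransition p.1 p.2) ''
    {p | W.Represents p.1 p.2.1.src}
  finE := have := W.finL; have := W.finE.to_subtype; (Set.toFinite _).image _

noncomputable def letterLabel [Nonempty S] (γ : Option W.E) : S :=
  γ.elim (Classical.arbitrary S) (·.1.label)

def letterWeight [Zero M] (γ : Option W.E) : M × M :=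
  γ.elim (0, 0) fun e => (W.wtL e.1.src, W.wtE e.1)

def decodeRun (v : List (Option W.E × ℝ≥0)) : List (Edge W.L S W.C) :=
  (v.filterMap Prod.fst).map Subtype.val

theorem edgeAutomaton_sequential : W.edgeAutomaton.Sequential := by
  refine ⟨⟨none, rfl⟩, ?_⟩
  rintro _ ⟨⟨o, e⟩, -, rfl⟩ _ ⟨⟨o', e'⟩, -, rfl⟩ (rfl : o = o') hlab
  obtain rfl : e = e' := Option.some_injective _ hlab
  rfl

theorem relabel_letterWeight [Zero M] [Nonempty S] {v : List (Option W.E × ℝ≥0)}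
    (hv : ∀ p ∈ v, p.1.isSome) :
    relabel W.letterWeight v = W.runWord (relabel W.letterLabel v) (W.decodeRun v) := by
  induction v with
  | nil => rfl
  | cons p v ih =>
    obtain ⟨γ, t⟩ := p
    obtain ⟨e, rfl⟩ := Option.isSome_iff_exists.1 (hv _ List.mem_cons_self)
    exact congrArg _ (ih fun p hp => hv p (List.mem_cons_of_mem _ hp))

theorem edgeAutomaton_isRunFrom [Nonempty S] {ℓ ν u es} (h : W.IsRunFrom ℓ ν u es)
    {o : Option W.L} (ho : W.Represents o ℓ) :
    ∃ v fs, relabel W.letterLabel v = u ∧ W.decodeRun v = es ∧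
      W.edgeAutomaton.IsRunFrom o ν v fs := by
  induction ℓ, ν, u, es using TimedAutomaton.IsRunFrom.induct W.toTimedAutomaton generalizing o with
  | case1 ℓ ν => exact ⟨[], [], rfl, rfl, ℓ, h, ho⟩
  | case2 ℓ ν a t u e es ih =>
    obtain ⟨he, rfl, rfl, hg, hrun⟩ := h
    obtain ⟨v, fs, rfl, rfl, hrun'⟩ := ih hrun (o := some e.dst) rfl
    exact ⟨(some ⟨e, he⟩, t) :: v, W.edgeTransition o ⟨e, he⟩ :: fs, rfl, rfl,
      ⟨⟨(o, ⟨e, he⟩), ho, rfl⟩, rfl, rfl, hg, hrun'⟩⟩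
  | case3 | case4 => exact h.elim

theorem isRunFrom_of_edgeAutomaton [Nonempty S] {o ν v fs}
    (h : W.edgeAutomaton.IsRunFrom o ν v fs) :
    ∃ ℓ, W.Represents o ℓ ∧ W.IsRunFrom ℓ ν (relabel W.letterLabel v) (W.decodeRun v) ∧
      ∀ p ∈ v, p.1.isSome := by
  induction o, ν, v, fs using TimedAutomaton.IsRunFrom.induct W.edgeAutomaton with
  | case1 o ν =>
    obtain ⟨ℓ, hF, ho⟩ := h
    exact ⟨ℓ, ho, hF, by simp⟩
  | case2 o ν γ t v d fs ih =>
    obtain ⟨⟨⟨o, e⟩, ho, rfl⟩, rfl, rfl, hg, hrun⟩ := h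
    obtain ⟨ℓ, rfl, hrunW, hsome⟩ := ih hrun
    exact ⟨e.1.src, ho, ⟨e.2, rfl, rfl, hg, hrunW⟩, List.forall_mem_cons.2 ⟨rfl, hsome⟩⟩
  | case3 | case4 => exact h.elim

end WTA

theorem QTLRecognizable.nivatMem_sequential {S M : Type} [Nonempty S] [AddCommMonoid M]
    {val : List ((M × M) × ℝ≥0) → M} {𝕃 : TimedWord S → M} (h𝕃 : QTLRecognizable val 𝕃) :
    NivatMem val (fun T => T.Sequential) 𝕃 := by
  obtain ⟨W, hW⟩ := h𝕃
  have := W.finE.to_subtype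
  refine ⟨Option W.E, inferInstance, ⟨none⟩, W.letterLabel, W.letterWeight, W.edgeAutomaton.Lang,
    ⟨_, W.edgeAutomaton_sequential, rfl⟩, fun w => ?_⟩
  rw [← hW w, pushQTL_interQTL, WTA.behavior]
  have decode_spec : ∀ v ∈ {v | mapTimedWord W.letterLabel v = w} ∩ W.edgeAutomaton.Lang,
      W.decodeRun v.1 ∈ W.RunOn w ∧ (∀ p ∈ v.1, p.1.isSome) ∧ relabel W.letterLabel v.1 = w.1 := by
    rintro v ⟨hvw, fs, _, rfl, hrun⟩
    obtain ⟨ℓ, hℓ, hrunW, hsome⟩ := W.isRunFrom_of_edgeAutomaton hrun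
    have hvw : relabel W.letterLabel v.1 = w.1 := (mapTimedWord_eq_iff _ _ _).1 hvw
    exact ⟨⟨ℓ, hℓ, hvw ▸ hrunW⟩, hsome, hvw⟩
  refine (finsum_mem_eq_of_bijOn (fun v => W.decodeRun v.1)
    ⟨fun v hv => (decode_spec v hv).1, ?_, ?_⟩ fun v hv => ?_).symm
  · intro v hv v' hv' hvv'
    obtain ⟨-, hsome, hvw⟩ := decode_spec v hv
    obtain ⟨-, hsome', hv'w⟩ := decode_spec v' hv'
    refine Subtype.ext (List.eq_of_filterMap_fst_eq hsome hsome' ?_ ?_)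
    · rw [← map_snd_relabel W.letterLabel, hvw, ← hv'w, map_snd_relabel]
    · exact List.map_injective_iff.2 Subtype.val_injective hvv'
  · rintro es ⟨ℓ, hℓ, hrun⟩
    obtain ⟨v, fs, hvw, rfl, hrun'⟩ := W.edgeAutomaton_isRunFrom hrun (o := none) hℓ
    have hv : v ≠ [] := by
      rintro rfl
      exact w.2 hvw.symm
    exact ⟨⟨v, hv⟩, ⟨Subtype.ext hvw, fs, none, rfl, hrun'⟩, rfl⟩
  · obtain ⟨-, hsome, hvw⟩ := decode_spec v hv
    simp only [valComp, ← hvw]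
    exact congrArg val (W.relabel_letterWeight hsome)

namespace TimedAutomaton

variable {Γ S : Type} (T : TimedAutomaton Γ) (h : Γ → S)

def liftEdge (e : Edge T.L Γ T.C) (o : Option Γ) : Edge (T.L × Option Γ) S T.C :=
  ⟨(e.src, some e.label), h e.label, e.guard, e.reset, (e.dst, o)⟩

def liftRun : List (Edge T.L Γ T.C) → List (Edge (T.L × Option Γ) S T.C)
  | [] => []
  | e :: es => T.liftEdge h e (es.head?.map Edge.label) :: liftRun es

theorem liftEdge_injective {e e' : Edge T.L Γ T.C} {o o' : Option Γ}
    (he : T.liftEdge h e o = T.liftEdge h e' o') : e = e' := by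
  cases e; cases e'
  simp_all [liftEdge]

theorem liftRun_injective : Function.Injective (T.liftRun h) := by
  intro es es' hes
  induction es generalizing es' with
  | nil => cases es' with
    | nil => rfl
    | cons => exact (List.cons_ne_nil _ _ hes.symm).elim
  | cons e es ih => cases es' with
    | nil => exact (List.cons_ne_nil _ _ hes).elim
    | cons e' es' =>
      obtain ⟨he, hes⟩ := List.cons_eq_cons.1 hes
      rw [T.liftEdge_injective h he, ih hes]

/-- The weighted automaton over `S` whose runs are the `h`-images of the runs of `T`, weighted
by `g`. A location also records the letter about to be read (`none` at the end), so that the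
location weight can be read off `g`. -/
@[reducible] def weightedImage [Finite Γ] {M : Type} [Zero M] (g : Γ → M × M) : WTA S M where
  L := T.L × Option Γ
  C := T.C
  finL := have := T.finL; inferInstance
  finC := T.finC
  I := {p | p.1 ∈ T.I}
  F := {p | p.1 ∈ T.F ∧ p.2 = none}
  E := (fun p => T.liftEdge h p.1 p.2) '' (T.E ×ˢ Set.univ)
  finE := (T.finE.prod Set.finite_univ).image _
  wtL p := p.2.elim 0 fun γ => (g γ).1
  wtE d := d.src.2.elim 0 fun γ => (g γ).2

variable [Finite Γ] {M : Type} [Zero M] (g : Γ → M × M)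

theorem runWord_liftRun (u : List (S × ℝ≥0)) (es : List (Edge T.L Γ T.C)) :
    (T.weightedImage h g).runWord u (T.liftRun h es) = relabel g (readWord es u) := by
  induction es generalizing u with
  | nil => cases u <;> rfl
  | cons e es ih => cases u with
    | nil => rfl
    | cons p u => exact congrArg _ (ih u)

theorem weightedImage_isRunFrom {ℓ ν v es} (hrun : T.IsRunFrom ℓ ν v es) :
    (T.weightedImage h g).IsRunFrom (ℓ, es.head?.map Edge.label) ν (relabel h v)
      (T.liftRun h es) := by
  induction ℓ, ν, v, es using IsRunFrom.induct T with
  | case1 ℓ ν => exact ⟨hrun, rfl⟩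
  | case2 ℓ ν a t v e es ih =>
    obtain ⟨he, rfl, rfl, hg, hrun⟩ := hrun
    exact ⟨⟨(e, _), ⟨he, trivial⟩, rfl⟩, rfl, rfl, hg, ih hrun⟩
  | case3 | case4 => exact hrun.elim

theorem isRunFrom_of_weightedImage {ℓ o ν u ds}
    (hrun : (T.weightedImage h g).IsRunFrom (ℓ, o) ν u ds) :
    ∃ v es, T.IsRunFrom ℓ ν v es ∧ relabel h v = u ∧ ds = T.liftRun h es ∧
      o = es.head?.map Edge.label := by
  induction u generalizing ℓ o ν ds with
  | nil =>
    cases ds with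
    | nil => exact ⟨[], [], hrun.1, rfl, rfl, hrun.2⟩
    | cons => exact hrun.elim
  | cons p u ih =>
    obtain ⟨a, t⟩ := p
    cases ds with
    | nil => exact hrun.elim
    | cons d ds =>
      obtain ⟨⟨⟨e, o'⟩, ⟨he, -⟩, rfl⟩, hsrc, rfl, hg, hrun⟩ := hrun
      obtain ⟨rfl, rfl⟩ := Prod.mk.inj hsrc
      obtain ⟨v, es, hrunT, rfl, rfl, rfl⟩ := ih hrun
      exact ⟨(e.label, t) :: v, e :: es, ⟨he, rfl, rfl, hg, hrunT⟩, rfl, rfl, rfl⟩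

end TimedAutomaton

theorem NivatMem.qtlRecognizable {S M : Type} [AddCommMonoid M]
    {val : List ((M × M) × ℝ≥0) → M} {𝕃 : TimedWord S → M}
    (h𝕃 : NivatMem val (fun T => T.Unambiguous) 𝕃) : QTLRecognizable val 𝕃 := by
  obtain ⟨Γ, _, _, h, g, _, ⟨T, hT, rfl⟩, h𝕃⟩ := h𝕃
  refine ⟨T.weightedImage h g, fun w => ?_⟩
  rw [h𝕃, pushQTL_interQTL, WTA.behavior]
  -- by unambiguity, `run v` is the only run of `T` on `v` whenever `v ∈ L(T)`
  let run (v : TimedWord Γ) : List (Edge T.L Γ T.C) := Classical.epsilon (· ∈ T.RunOn v)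
  have run_mem : ∀ v ∈ {v | mapTimedWord h v = w} ∩ T.Lang,
      relabel h v.1 = w.1 ∧ ∃ ℓ ∈ T.I, T.IsRunFrom ℓ ClockVal.zero v.1 (run v) :=
    fun v hv => ⟨(mapTimedWord_eq_iff h v w).1 hv.1, Classical.epsilon_spec hv.2⟩
  refine (finsum_mem_eq_of_bijOn (fun v => T.liftRun h (run v)) ⟨?_, ?_, ?_⟩ fun v hv => ?_).symm
  · intro v hv
    obtain ⟨hvw, ℓ, hℓ, hrun⟩ := run_mem v hv
    exact ⟨_, hℓ, hvw ▸ T.weightedImage_isRunFrom h g hrun⟩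
  · intro v hv v' hv' hvv'
    obtain ⟨hvw, _, -, hrun⟩ := run_mem v hv
    obtain ⟨hv'w, _, -, hrun'⟩ := run_mem v' hv'
    have hrun_eq : run v = run v' := T.liftRun_injective h hvv'
    rw [hrun_eq] at hrun
    refine Subtype.ext ?_
    rw [← hrun.readWord_relabel h, ← hrun'.readWord_relabel h, hvw, hv'w]
  · rintro ds ⟨⟨ℓ, o⟩, hℓ, hrun⟩
    obtain ⟨v, es, hrunT, hvw, rfl, -⟩ := T.isRunFrom_of_weightedImage h g hrun
    have hv : v ≠ [] := by
      rintro rfl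
      exact w.2 hvw.symm
    have hes : ∃ ℓ ∈ T.I, T.IsRunFrom ℓ ClockVal.zero v es := ⟨ℓ, hℓ, hrunT⟩
    refine ⟨⟨v, hv⟩, ⟨Subtype.ext hvw, es, hes⟩, ?_⟩
    exact congrArg _ (hT ⟨v, hv⟩ (Classical.epsilon_spec ⟨es, hes⟩) hes)
  · obtain ⟨hvw, _, -, hrun⟩ := run_mem v hv
    rw [valComp, T.runWord_liftRun, ← hvw, hrun.readWord_relabel]
    rfl

theorem qtlRecognizable_iff_nivatMem {S M : Type} [Nonempty S] [AddCommMonoid M]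
    {val : List ((M × M) × ℝ≥0) → M} {𝕃 : TimedWord S → M}
    {P : ∀ {Γ : Type}, TimedAutomaton Γ → Prop}
    (hseq : ∀ {Γ : Type} (T : TimedAutomaton Γ), T.Sequential → P T)
    (hunamb : ∀ {Γ : Type} (T : TimedAutomaton Γ), P T → T.Unambiguous) :
    QTLRecognizable val 𝕃 ↔ NivatMem val P 𝕃 :=
  ⟨fun h => h.nivatMem_sequential.mono hseq, fun h => (h.mono hunamb).qtlRecognizable⟩

theorem nivat_theorem_for_WTA_general {S M : Type} [Nonempty S]
    [AddCommMonoid M] (val : List ((M × M) × ℝ≥0) → M) :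
    (∀ 𝕃 : TimedWord S → M,
        QTLRecognizable val 𝕃 ↔ NivatMem val (fun {_} T => T.Sequential) 𝕃) ∧
    (∀ 𝕃 : TimedWord S → M,
        QTLRecognizable val 𝕃 ↔ NivatMem val (fun {_} T => T.Deterministic) 𝕃) ∧
    (∀ 𝕃 : TimedWord S → M,
        QTLRecognizable val 𝕃 ↔ NivatMem val (fun {_} T => T.Unambiguous) 𝕃) ∧
    (∀ 𝕃 : TimedWord S → M,
        QTLRecognizable val 𝕃 → NivatMem val (fun {_} _ => True) 𝕃) :=
  ⟨fun _ => qtlRecognizable_iff_nivatMem (fun _ h => h)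
      fun _ h => h.deterministic.unambiguous,
    fun _ => qtlRecognizable_iff_nivatMem (fun _ h => h.deterministic)
      fun _ h => h.unambiguous,
    fun _ => qtlRecognizable_iff_nivatMem (fun _ h => h.deterministic.unambiguous) fun _ h => h,
    fun _ h => h.nivatMem_sequential.mono fun _ _ => trivial⟩

/-- Nivat theorem for weighted timed automata. For every alphabet `Σ`
and every timed valuation monoid `𝕄`:
`Rec(Σ,𝕄) = N^Seq(Σ,𝕄) = N^Det(Σ,𝕄) = N^Unamb(Σ,𝕄) ⊆ N(Σ,𝕄)`. -/
theorem nivat_theorem_for_WTA {S M : Type} [Finite S] [Nonempty S]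
    [AddCommMonoid M] (val : List ((M × M) × ℝ≥0) → M) :
    (∀ 𝕃 : TimedWord S → M,
        QTLRecognizable val 𝕃 ↔ NivatMem val (fun {_} T => T.Sequential) 𝕃) ∧
    (∀ 𝕃 : TimedWord S → M,
        QTLRecognizable val 𝕃 ↔ NivatMem val (fun {_} T => T.Deterministic) 𝕃) ∧
    (∀ 𝕃 : TimedWord S → M,
        QTLRecognizable val 𝕃 ↔ NivatMem val (fun {_} T => T.Unambiguous) 𝕃) ∧
    (∀ 𝕃 : TimedWord S → M,
        QTLRecognizable val 𝕃 → NivatMem val (fun {_} _ => True) 𝕃) :=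
  nivat_theorem_for_WTA_general val
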